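/- (Division theorem) Let a ∈ (ℚ_{>0})^n, let F_1,…,F_s be nonzero elements of F = K[[x_1,…,x_n]], and let G be a nonzero element of F. Then there exist H ∈ K[[F_1,…,F_s]] and R ∈ F such that: (1) G = H + R; (2) for every β ∈ Supp(R), the monomial x^β does not belong to K[[M(F_1,a),…,M(F_s,a)]]; (3) ν(H,a) ≥ ν(G,a) and ν(R,a) ≥ ν(G,a) (with the convention ν(0,a) = +∞). -/

import Mathlib

/-!
Exponents are compared by `a`-weight first and, at equal weight, by `≺` reversed; since all
weights are positive only finitely many exponents lie below any given one, so this order is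
well founded. For every exponent `β` in the monoid `Γ` generated by the exponents `exp(F_i,a)`, a
suitably scaled product of the `F_i` has coefficient `1` at `β` and support weakly after `β`.
Solving the resulting unitriangular system along the order writes the `Γ`-part of `G` as an
adically convergent combination `H` of these products, each of weight at least `ν(G,a)`. Then
`R = G - H` is supported outside `Γ`, whereas every series in `K[[M(F_1,a),…,M(F_s,a)]]` is
supported in `Γ`.
-/

noncomputable section

namespace CanonicalFan

open MvPowerSeries

variable (K : Type*) [Field K] (n : ℕ)

/-- The weight `⟨a, α⟩ = ∑ i, a i * α i` of an exponent `α` with respect to `a`. -/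
def weight (a : Fin n → ℝ) (α : Fin n →₀ ℕ) : ℝ := ∑ i, a i * (α i : ℝ)

/-- The support of a formal power series. -/
def supp (f : MvPowerSeries (Fin n) K) : Set (Fin n →₀ ℕ) :=
  {α | MvPowerSeries.coeff α f ≠ 0}

/-- The `a`-valuation `ν(f,a)`, with the convention `ν(0,a) = +∞`. -/
def nu (a : Fin n → ℝ) (f : MvPowerSeries (Fin n) K) : EReal :=
  sInf ((fun α => ((weight n a α : ℝ) : EReal)) '' supp K n f)

open Classical in
/-- The `a`-initial form `in(f,a)` of a power series. -/
def initialForm (a : Fin n → ℝ) (f : MvPowerSeries (Fin n) K) :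
    MvPowerSeries (Fin n) K :=
  fun α => if ((weight n a α : ℝ) : EReal) = nu K n a f then MvPowerSeries.coeff α f else 0

open Classical in
/-- `exp(f,a)`: the `≺`-maximal element of the support of `in(f,a)`, where `≺` is the
well-ordering `r` (junk value `0` if no maximal element exists). -/
def exponent (r : (Fin n →₀ ℕ) → (Fin n →₀ ℕ) → Prop) (a : Fin n → ℝ)
    (f : MvPowerSeries (Fin n) K) : Fin n →₀ ℕ :=
  if h : ∃ β ∈ supp K n (initialForm K n a f),
      ∀ γ ∈ supp K n (initialForm K n a f), γ = β ∨ r γ β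
  then h.choose else 0

/-- The `a`-leading monomial `M(f,a) = c_{exp(f,a)} x^{exp(f,a)}`. -/
def leadMon (r : (Fin n →₀ ℕ) → (Fin n →₀ ℕ) → Prop) (a : Fin n → ℝ)
    (f : MvPowerSeries (Fin n) K) : MvPowerSeries (Fin n) K :=
  MvPowerSeries.monomial (exponent K n r a f)
    (MvPowerSeries.coeff (exponent K n r a f) f)

/-- The maximal ideal `(x_1, …, x_n)` of `K[[x_1,…,x_n]]`. -/
def mIdeal : Ideal (MvPowerSeries (Fin n) K) :=
  Ideal.span (Set.range (MvPowerSeries.X : Fin n → MvPowerSeries (Fin n) K))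

/-- `K[[S]]`: the smallest `K`-subalgebra of `K[[x_1,…,x_n]]` containing `S` and closed in
the `(x_1,…,x_n)`-adic topology; concretely, the adic closure of `Algebra.adjoin K S`. -/
def closedAdjoin (S : Set (MvPowerSeries (Fin n) K)) :
    Subalgebra K (MvPowerSeries (Fin n) K) where
  carrier := {f | ∀ N : ℕ, ∃ g ∈ Algebra.adjoin K S, f - g ∈ (mIdeal K n) ^ N}
  algebraMap_mem' c N :=
    ⟨algebraMap K _ c, Subalgebra.algebraMap_mem _ c, by simp [Ideal.zero_mem]⟩
  add_mem' {f g} hf hg N := by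
    obtain ⟨p, hp, hfp⟩ := hf N
    obtain ⟨q, hq, hgq⟩ := hg N
    exact ⟨p + q, add_mem hp hq, by simpa [add_sub_add_comm] using Ideal.add_mem _ hfp hgq⟩
  mul_mem' {f g} hf hg N := by
    obtain ⟨p, hp, hfp⟩ := hf N
    obtain ⟨q, hq, hgq⟩ := hg N
    refine ⟨p * q, mul_mem hp hq, ?_⟩
    have h : f * g - p * q = f * (g - q) + (f - p) * q := by ring
    rw [h]
    exact Ideal.add_mem _ (Ideal.mul_mem_left _ _ hgq) (Ideal.mul_mem_right _ _ hfp)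

/-- `exp(A,a) = {exp(f,a) : f ∈ A, f ≠ 0}`. -/
def expSet (r : (Fin n →₀ ℕ) → (Fin n →₀ ℕ) → Prop) (a : Fin n → ℝ)
    (A : Set (MvPowerSeries (Fin n) K)) : Set (Fin n →₀ ℕ) :=
  {β | ∃ f ∈ A, f ≠ 0 ∧ exponent K n r a f = β}

/-- `in(A,a) = K[[in(f,a) : f ∈ A ∖ {0}]]`. -/
def inAlgebra (a : Fin n → ℝ) (A : Set (MvPowerSeries (Fin n) K)) :
    Subalgebra K (MvPowerSeries (Fin n) K) :=
  closedAdjoin K n {g | ∃ f ∈ A, f ≠ 0 ∧ initialForm K n a f = g}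

/-- `M(A,a) = K[[M(f,a) : f ∈ A ∖ {0}]]`. -/
def leadAlgebra (r : (Fin n →₀ ℕ) → (Fin n →₀ ℕ) → Prop) (a : Fin n → ℝ)
    (A : Set (MvPowerSeries (Fin n) K)) : Subalgebra K (MvPowerSeries (Fin n) K) :=
  closedAdjoin K n {g | ∃ f ∈ A, f ≠ 0 ∧ leadMon K n r a f = g}

set_option synthInstance.maxHeartbeats 1000000 in
/-- The length of `F/A` as an `A`-module is finite. -/
def FiniteColength (A : Subalgebra K (MvPowerSeries (Fin n) K)) : Prop :=
  IsFiniteLength A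
    (MvPowerSeries (Fin n) K ⧸ LinearMap.range (Algebra.linearMap A (MvPowerSeries (Fin n) K)))

/-- `{g_1,…,g_r}` is an `a`-canonical basis of `A`. -/
def IsCanonicalBasis (r : (Fin n →₀ ℕ) → (Fin n →₀ ℕ) → Prop) (a : Fin n → ℝ)
    (A : Subalgebra K (MvPowerSeries (Fin n) K)) {m : ℕ}
    (g : Fin m → MvPowerSeries (Fin n) K) : Prop :=
  (∀ i, g i ∈ A ∧ g i ≠ 0) ∧
    leadAlgebra K n r a (A : Set (MvPowerSeries (Fin n) K)) =
      closedAdjoin K n (Set.range fun i => leadMon K n r a (g i))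

/-- `{g_1,…,g_r}` is a minimal `a`-canonical basis of `A`. -/
def IsMinimalCanonicalBasis (r : (Fin n →₀ ℕ) → (Fin n →₀ ℕ) → Prop) (a : Fin n → ℝ)
    (A : Subalgebra K (MvPowerSeries (Fin n) K)) {m : ℕ}
    (g : Fin m → MvPowerSeries (Fin n) K) : Prop :=
  IsCanonicalBasis K n r a A g ∧
    ∀ T : Set (MvPowerSeries (Fin n) K),
      T ⊂ Set.range (fun i => leadMon K n r a (g i)) →
        closedAdjoin K n T ≠ leadAlgebra K n r a (A : Set (MvPowerSeries (Fin n) K))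

/-- `{g_1,…,g_r}` is the `a`-reduced canonical basis of `A`. -/
def IsReducedCanonicalBasis (r : (Fin n →₀ ℕ) → (Fin n →₀ ℕ) → Prop) (a : Fin n → ℝ)
    (A : Subalgebra K (MvPowerSeries (Fin n) K)) {m : ℕ}
    (g : Fin m → MvPowerSeries (Fin n) K) : Prop :=
  IsMinimalCanonicalBasis K n r a A g ∧
    (∀ i, MvPowerSeries.coeff (exponent K n r a (g i)) (g i) = 1) ∧
    ∀ i, ∀ α ∈ supp K n (g i - leadMon K n r a (g i)),
      (MvPowerSeries.monomial α (1 : K)) ∉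
        closedAdjoin K n (Set.range fun j => leadMon K n r a (g j))

/-- A power series is a (nonzero) monomial. -/
def IsMonomial (g : MvPowerSeries (Fin n) K) : Prop :=
  ∃ (α : Fin n →₀ ℕ) (c : K), c ≠ 0 ∧ g = MvPowerSeries.monomial α c

section AdicFiltration

variable {σ R : Type*} [CommSemiring R]

theorem coeff_eq_zero_of_mem_span_X_pow {N : ℕ} {f : MvPowerSeries σ R}
    (hf : f ∈ Ideal.span (Set.range X) ^ N) {β : σ →₀ ℕ} (hβ : β.degree < N) :
    coeff β f = 0 := by
  classical
  induction N generalizing f β with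
  | zero => omega
  | succ N ih =>
    rw [pow_succ] at hf
    refine Submodule.mul_induction_on hf (C := fun f => ∀ β : σ →₀ ℕ, β.degree < N + 1 →
      coeff β f = 0) ?_ ?_ β hβ
    · intro p hp q hq β hβ
      have hq0 : constantCoeff q = 0 := by
        refine (Ideal.span_le (I := RingHom.ker constantCoeff)).2 ?_ hq
        rintro _ ⟨i, rfl⟩
        simp
      rw [coeff_mul]
      refine Finset.sum_eq_zero ?_
      rintro ⟨u, v⟩ huv
      obtain rfl : u + v = β := Finset.HasAntidiagonal.mem_antidiagonal.1 huv
      rcases eq_or_ne v 0 with rfl | hv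
      · simp [hq0]
      · have hv' : 0 < v.degree := Nat.pos_of_ne_zero (mt (Finsupp.degree_eq_zero_iff v).1 hv)
        have hu : u.degree < N := by
          rw [map_add] at hβ
          omega
        simp [ih hp hu]
    · intro x y hx hy β hβ
      rw [map_add, hx β hβ, hy β hβ, add_zero]

theorem exists_eq_sum_X_mul [Fintype σ] {f : MvPowerSeries σ R} (hf : constantCoeff f = 0) :
    ∃ g : σ → MvPowerSeries σ R, f = ∑ i, X i * g i ∧
      ∀ i β, coeff β (g i) = 0 ∨ coeff β (g i) = coeff (β + Finsupp.single i 1) f := by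
  classical
  let _ : LinearOrder σ := LinearOrder.lift' _ (Fintype.equivFin σ).injective
  -- each monomial of `f` is divided by its smallest variable
  let g : σ → MvPowerSeries σ R := fun i α =>
    if (α + Finsupp.single i 1).support.min = (i : WithTop σ) then
      coeff (α + Finsupp.single i 1) f else 0
  have hg : ∀ i α, coeff α (g i) = if (α + Finsupp.single i 1).support.min = (i : WithTop σ) then
      coeff (α + Finsupp.single i 1) f else 0 := fun _ _ => rfl
  refine ⟨g, ext fun β => ?_, fun i β => by rw [hg]; split_ifs <;> simp⟩
  have hXg : ∀ i, coeff β (X i * g i) = if Finsupp.single i 1 ≤ β then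
      (if β.support.min = (i : WithTop σ) then coeff β f else 0) else 0 := by
    intro i
    rw [X_def, coeff_monomial_mul, one_mul]
    by_cases h : Finsupp.single i 1 ≤ β
    · rw [if_pos h, if_pos h, hg, tsub_add_cancel_of_le h]
    · rw [if_neg h, if_neg h]
  rw [map_sum]
  simp_rw [hXg]
  rcases eq_or_ne β 0 with rfl | hβ
  · simp [hf]
  obtain ⟨j, hj⟩ := Finset.min_of_nonempty (Finsupp.support_nonempty_iff.2 hβ)
  have hjβ : Finsupp.single j 1 ≤ β := by
    rw [Finsupp.single_le_iff]
    exact Nat.one_le_iff_ne_zero.2 (Finsupp.mem_support_iff.1 (Finset.mem_of_min hj))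
  rw [Finset.sum_eq_single j (fun i _ hij => by simp [hj, hij.symm]) (by simp), if_pos hjβ,
    if_pos hj]

theorem mem_span_X_pow_of_coeff_eq_zero [Fintype σ] {N : ℕ} {f : MvPowerSeries σ R}
    (hf : ∀ β : σ →₀ ℕ, β.degree < N → coeff β f = 0) :
    f ∈ Ideal.span (Set.range X) ^ N := by
  induction N generalizing f with
  | zero => simp
  | succ N ih =>
    obtain ⟨g, rfl, hg⟩ := exists_eq_sum_X_mul (f := f) (by simpa using hf 0 (by simp))
    refine Ideal.sum_mem _ fun i _ => ?_
    rw [pow_succ']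
    refine Ideal.mul_mem_mul (Ideal.subset_span ⟨i, rfl⟩) (ih fun β hβ => ?_)
    rcases hg i β with h | h
    · exact h
    · rw [h]
      exact hf _ (by rw [map_add, Finsupp.degree_single]; omega)

end AdicFiltration

variable {K n}

open scoped Pointwise

section Weight

variable {a : Fin n → ℝ}

theorem weight_add (α β : Fin n →₀ ℕ) : weight n a (α + β) = weight n a α + weight n a β := by
  simp only [weight, Finsupp.add_apply, Nat.cast_add, mul_add, Finset.sum_add_distrib]

theorem finite_setOf_weight_le (ha : ∀ i, 0 < a i) (w : ℝ) :
    {α : Fin n →₀ ℕ | weight n a α ≤ w}.Finite := by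
  refine (Set.finite_Icc 0 (Finsupp.equivFunOnFinite.symm fun i => ⌊w / a i⌋₊)).subset ?_
  intro α hα
  refine ⟨zero_le, fun i => ?_⟩
  change α i ≤ ⌊w / a i⌋₊
  refine Nat.le_floor ?_
  rw [le_div_iff₀ (ha i), mul_comm]
  refine le_trans ?_ hα
  exact Finset.single_le_sum (f := fun j => a j * (α j : ℝ))
    (fun j _ => mul_nonneg (ha j).le (Nat.cast_nonneg _)) (Finset.mem_univ i)

end Weight

theorem supp_mul_subset (f g : MvPowerSeries (Fin n) K) :
    supp K n (f * g) ⊆ supp K n f + supp K n g := by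
  classical
  intro β hβ
  have hβ' : coeff β (f * g) ≠ 0 := hβ
  rw [coeff_mul] at hβ'
  obtain ⟨⟨p, q⟩, hpq, hne⟩ := Finset.exists_ne_zero_of_sum_ne_zero hβ'
  exact ⟨p, left_ne_zero_of_mul hne, q, right_ne_zero_of_mul hne,
    Finset.HasAntidiagonal.mem_antidiagonal.1 hpq⟩

theorem supp_add_subset (f g : MvPowerSeries (Fin n) K) :
    supp K n (f + g) ⊆ supp K n f ∪ supp K n g := by
  intro β hβ
  by_contra h
  simp only [Set.mem_union, supp, Set.mem_ofPred_eq, not_or, not_not] at h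
  exact hβ (by rw [map_add, h.1, h.2, add_zero])

theorem supp_sub_subset (f g : MvPowerSeries (Fin n) K) :
    supp K n (f - g) ⊆ supp K n f ∪ supp K n g := by
  simpa [sub_eq_add_neg, supp] using supp_add_subset f (-g)

theorem supp_smul_subset (c : K) (f : MvPowerSeries (Fin n) K) :
    supp K n (c • f) ⊆ supp K n f :=
  fun β hβ => right_ne_zero_of_mul (a := c) (by rw [← coeff_smul]; exact hβ)

theorem supp_one : supp K n (1 : MvPowerSeries (Fin n) K) = {0} := by
  classical
  ext β
  simp [supp, coeff_one]

section Valuation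

variable {a : Fin n → ℝ} {f g : MvPowerSeries (Fin n) K}

theorem le_nu_iff {c : EReal} : c ≤ nu K n a f ↔ ∀ α ∈ supp K n f, c ≤ weight n a α := by
  simp [nu]

theorem nu_le_weight {α : Fin n →₀ ℕ} (hα : α ∈ supp K n f) : nu K n a f ≤ weight n a α :=
  sInf_le ⟨α, hα, rfl⟩

theorem le_nu_sub {c : EReal} (hf : c ≤ nu K n a f) (hg : c ≤ nu K n a g) :
    c ≤ nu K n a (f - g) := by
  rw [le_nu_iff] at *
  intro α hα
  rcases supp_sub_subset f g hα with h | h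
  exacts [hf α h, hg α h]

theorem exists_mem_supp_weight_min (ha : ∀ i, 0 < a i) (hf : f ≠ 0) :
    ∃ α ∈ supp K n f, ∀ γ ∈ supp K n f, weight n a α ≤ weight n a γ := by
  obtain ⟨α₀, hα₀⟩ : (supp K n f).Nonempty := by
    by_contra h
    exact hf (ext fun β => by_contra fun hβ => h ⟨β, by simpa [supp] using hβ⟩)
  obtain ⟨α, ⟨hα, hαα₀⟩, hmin⟩ :=
    Set.exists_min_image (supp K n f ∩ {γ | weight n a γ ≤ weight n a α₀}) (weight n a)
      ((finite_setOf_weight_le ha _).inter_of_right _) ⟨α₀, hα₀, Set.mem_ofPred.2 le_rfl⟩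
  refine ⟨α, hα, fun γ hγ => ?_⟩
  rcases le_total (weight n a γ) (weight n a α₀) with h | h
  exacts [hmin γ ⟨hγ, h⟩, hαα₀.trans h]

theorem nu_eq_weight {α : Fin n →₀ ℕ} (hα : α ∈ supp K n f)
    (hmin : ∀ γ ∈ supp K n f, weight n a α ≤ weight n a γ) : nu K n a f = weight n a α :=
  le_antisymm (nu_le_weight hα) (le_nu_iff.2 fun γ hγ => EReal.coe_le_coe_iff.2 (hmin γ hγ))

theorem mem_supp_initialForm_iff {γ : Fin n →₀ ℕ} :
    γ ∈ supp K n (initialForm K n a f) ↔ γ ∈ supp K n f ∧ (weight n a γ : EReal) = nu K n a f := by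
  classical
  simp only [supp, Set.mem_ofPred_eq, coeff_apply, initialForm]
  split_ifs with h <;> simp [h]

end Valuation

theorem exists_rel_max_of_finite {α : Type*} {r : α → α → Prop} [IsStrictTotalOrder α r]
    {s : Set α} (hs : s.Finite) (hne : s.Nonempty) : ∃ m ∈ s, ∀ x ∈ s, x = m ∨ r x m := by
  have := hne.to_subtype
  obtain ⟨⟨m, hm⟩, -, hmax⟩ :=
    (hs.wellFoundedOn (r := Function.swap r)).has_min Set.univ Set.univ_nonempty
  refine ⟨m, hm, fun x hx => ?_⟩
  rcases trichotomous_of r x m with h | h | h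
  exacts [Or.inr h, Or.inl h, (hmax ⟨x, hx⟩ trivial h).elim]

def DivisionLT (r : (Fin n →₀ ℕ) → (Fin n →₀ ℕ) → Prop) (a : Fin n → ℝ)
    (β γ : Fin n →₀ ℕ) : Prop :=
  weight n a β < weight n a γ ∨ (weight n a β = weight n a γ ∧ r γ β)

section DivisionOrder

variable {r : (Fin n →₀ ℕ) → (Fin n →₀ ℕ) → Prop} {a : Fin n → ℝ} {β γ δ : Fin n →₀ ℕ}

theorem DivisionLT.weight_le (h : DivisionLT r a β γ) : weight n a β ≤ weight n a γ := by
  rcases h with h | h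
  exacts [h.le, h.1.le]

theorem DivisionLT.irrefl [Std.Irrefl r] : ¬DivisionLT r a β β := by
  rintro (h | h)
  exacts [lt_irrefl _ h, _root_.irrefl _ h.2]

theorem DivisionLT.trans [IsTrans _ r] (h₁ : DivisionLT r a β γ) (h₂ : DivisionLT r a γ δ) :
    DivisionLT r a β δ := by
  rcases h₁ with h₁ | ⟨h₁, h₁'⟩ <;> rcases h₂ with h₂ | ⟨h₂, h₂'⟩
  · exact Or.inl (h₁.trans h₂)
  · exact Or.inl (h₂ ▸ h₁)
  · exact Or.inl (h₁ ▸ h₂)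
  · exact Or.inr ⟨h₁.trans h₂, _root_.trans h₂' h₁'⟩

theorem DivisionLT.add_right (hradd : ∀ α β γ : Fin n →₀ ℕ, r α β → r (α + γ) (β + γ))
    (h : DivisionLT r a β γ) (δ : Fin n →₀ ℕ) : DivisionLT r a (β + δ) (γ + δ) := by
  unfold DivisionLT at h ⊢
  rw [weight_add, weight_add]
  rcases h with h | ⟨h, h'⟩
  exacts [Or.inl (by linarith), Or.inr ⟨by rw [h], hradd _ _ δ h'⟩]

theorem DivisionLT.add_left (hradd : ∀ α β γ : Fin n →₀ ℕ, r α β → r (α + γ) (β + γ))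
    (h : DivisionLT r a β γ) (δ : Fin n →₀ ℕ) : DivisionLT r a (δ + β) (δ + γ) := by
  simpa only [add_comm δ] using h.add_right hradd δ

theorem eq_and_eq_or_divisionLT_add [IsTrans _ r]
    (hradd : ∀ α β γ : Fin n →₀ ℕ, r α β → r (α + γ) (β + γ)) {β' p q : Fin n →₀ ℕ}
    (hp : p = β ∨ DivisionLT r a β p) (hq : q = β' ∨ DivisionLT r a β' q) :
    (p = β ∧ q = β') ∨ DivisionLT r a (β + β') (p + q) := by
  rcases hp with rfl | hp <;> rcases hq with rfl | hq
  · exact Or.inl ⟨rfl, rfl⟩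
  · exact Or.inr (hq.add_left hradd p)
  · exact Or.inr (hp.add_right hradd q)
  · exact Or.inr ((hp.add_right hradd β').trans (hq.add_left hradd p))

theorem finite_setOf_divisionLT (r : (Fin n →₀ ℕ) → (Fin n →₀ ℕ) → Prop) (ha : ∀ i, 0 < a i)
    (γ : Fin n →₀ ℕ) :
    {β | DivisionLT r a β γ}.Finite :=
  (finite_setOf_weight_le ha (weight n a γ)).subset fun _ h => DivisionLT.weight_le h

-- Each exponent has finitely many predecessors, and their number drops along the order.
theorem wellFounded_divisionLT [IsStrictOrder _ r] (ha : ∀ i, 0 < a i) :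
    WellFounded (DivisionLT r a) :=
  Subrelation.wf (q := DivisionLT r a)
    (fun {β γ} h => Set.ncard_lt_ncard (s := {δ | DivisionLT r a δ β})
      ⟨fun _ hδ => DivisionLT.trans hδ h, fun hsub => DivisionLT.irrefl (hsub h)⟩
      (finite_setOf_divisionLT r ha γ))
    (measure fun γ => {β | DivisionLT r a β γ}.ncard).wf

end DivisionOrder

def SuppAbove (r : (Fin n →₀ ℕ) → (Fin n →₀ ℕ) → Prop) (a : Fin n → ℝ)
    (f : MvPowerSeries (Fin n) K) (β : Fin n →₀ ℕ) : Prop :=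
  ∀ γ ∈ supp K n f, γ = β ∨ DivisionLT r a β γ

section SuppAbove

variable {r : (Fin n →₀ ℕ) → (Fin n →₀ ℕ) → Prop} {a : Fin n → ℝ}
  {f g : MvPowerSeries (Fin n) K} {β β' : Fin n →₀ ℕ}

theorem suppAbove_one : SuppAbove r a (1 : MvPowerSeries (Fin n) K) 0 := by
  intro γ hγ
  rw [supp_one] at hγ
  exact Or.inl hγ

theorem SuppAbove.smul (hf : SuppAbove r a f β) (c : K) : SuppAbove r a (c • f) β :=
  fun γ hγ => hf γ (supp_smul_subset c f hγ)

theorem SuppAbove.mul [IsStrictOrder _ r]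
    (hradd : ∀ α β γ : Fin n →₀ ℕ, r α β → r (α + γ) (β + γ))
    (hf : SuppAbove r a f β) (hg : SuppAbove r a g β') :
    SuppAbove r a (f * g) (β + β') ∧ coeff (β + β') (f * g) = coeff β f * coeff β' g := by
  classical
  refine ⟨fun γ hγ => ?_, ?_⟩
  · obtain ⟨p, hp, q, hq, rfl⟩ := supp_mul_subset f g hγ
    rcases eq_and_eq_or_divisionLT_add hradd (hf p hp) (hg q hq) with ⟨rfl, rfl⟩ | h
    exacts [Or.inl rfl, Or.inr h]
  · rw [coeff_mul]
    refine Finset.sum_eq_single_of_mem (β, β')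
      (Finset.HasAntidiagonal.mem_antidiagonal.2 rfl) ?_
    rintro ⟨p, q⟩ hpq hne
    by_contra h
    rcases eq_and_eq_or_divisionLT_add hradd (hf p (left_ne_zero_of_mul h))
      (hg q (right_ne_zero_of_mul h)) with ⟨rfl, rfl⟩ | hlt
    · exact hne rfl
    · rw [Finset.HasAntidiagonal.mem_antidiagonal.1 hpq] at hlt
      exact DivisionLT.irrefl hlt

end SuppAbove

theorem suppAbove_exponent {r : (Fin n →₀ ℕ) → (Fin n →₀ ℕ) → Prop} [IsStrictTotalOrder _ r]
    {a : Fin n → ℝ} (ha : ∀ i, 0 < a i) {f : MvPowerSeries (Fin n) K} (hf : f ≠ 0) :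
    SuppAbove r a f (exponent K n r a f) := by
  obtain ⟨α, hα, hmin⟩ := exists_mem_supp_weight_min ha hf
  have hin : ∀ γ, γ ∈ supp K n (initialForm K n a f) ↔
      γ ∈ supp K n f ∧ weight n a γ = weight n a α := by
    intro γ
    rw [mem_supp_initialForm_iff, nu_eq_weight hα hmin, EReal.coe_eq_coe_iff]
  have hex : ∃ β ∈ supp K n (initialForm K n a f),
      ∀ γ ∈ supp K n (initialForm K n a f), γ = β ∨ r γ β :=
    exists_rel_max_of_finite
      ((finite_setOf_weight_le ha (weight n a α)).subset fun γ hγ => ((hin γ).1 hγ).2.le)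
      ⟨α, (hin α).2 ⟨hα, rfl⟩⟩
  have hexp : exponent K n r a f = hex.choose := dif_pos hex
  obtain ⟨hβ, hmax⟩ := hex.choose_spec
  rw [← hexp] at hβ hmax
  obtain ⟨-, hβw⟩ := (hin _).1 hβ
  intro γ hγ
  rcases (hmin γ hγ).lt_or_eq with hlt | heq
  · exact Or.inr (Or.inl (hβw ▸ hlt))
  · rcases hmax γ ((hin γ).2 ⟨hγ, heq.symm⟩) with h | h
    exacts [Or.inl h, Or.inr (Or.inr ⟨hβw.trans heq, h⟩)]

theorem exists_mem_adjoin_suppAbove {r : (Fin n →₀ ℕ) → (Fin n →₀ ℕ) → Prop}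
    [IsStrictTotalOrder _ r]
    (hradd : ∀ α β γ : Fin n →₀ ℕ, r α β → r (α + γ) (β + γ))
    {a : Fin n → ℝ} (ha : ∀ i, 0 < a i) {ι : Type*} (F : ι → MvPowerSeries (Fin n) K)
    {β : Fin n →₀ ℕ} (hβ : β ∈ AddSubmonoid.closure (⋃ i, supp K n (leadMon K n r a (F i)))) :
    ∃ P ∈ Algebra.adjoin K (Set.range F), coeff β P = 1 ∧ SuppAbove r a P β := by
  classical
  induction hβ using AddSubmonoid.closure_induction with
  | mem e he =>
    obtain ⟨i, hi⟩ := Set.mem_iUnion.1 he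
    have hi' : coeff e (leadMon K n r a (F i)) ≠ 0 := hi
    rw [leadMon, coeff_monomial] at hi'
    obtain rfl : e = exponent K n r a (F i) := by_contra fun h => hi' (if_neg h)
    rw [if_pos rfl] at hi'
    have hF : F i ≠ 0 := fun h => hi' (by simp [h])
    refine ⟨(coeff (exponent K n r a (F i)) (F i))⁻¹ • F i,
      Subalgebra.smul_mem _ (Algebra.subset_adjoin (Set.mem_range_self i)) _, ?_,
      (suppAbove_exponent ha hF).smul _⟩
    rw [coeff_smul, inv_mul_cancel₀ hi']
  | zero => exact ⟨1, Subalgebra.one_mem _, coeff_zero_one, suppAbove_one⟩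
  | add β γ _ _ ihβ ihγ =>
    obtain ⟨P, hP, hP1, hPβ⟩ := ihβ
    obtain ⟨Q, hQ, hQ1, hQγ⟩ := ihγ
    obtain ⟨hPQ, hcoeff⟩ := hPβ.mul hradd hQγ
    exact ⟨P * Q, mul_mem hP hQ, by rw [hcoeff, hP1, hQ1, one_mul], hPQ⟩

theorem supp_subset_of_mem_adjoin (Γ : AddSubmonoid (Fin n →₀ ℕ))
    {T : Set (MvPowerSeries (Fin n) K)} (hT : ∀ t ∈ T, supp K n t ⊆ Γ)
    {g : MvPowerSeries (Fin n) K} (hg : g ∈ Algebra.adjoin K T) : supp K n g ⊆ Γ := by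
  classical
  induction hg using Algebra.adjoin_induction with
  | mem t ht => exact hT t ht
  | algebraMap v =>
    intro β hβ
    have hβ' : coeff β (C v) ≠ 0 := hβ
    rw [coeff_C] at hβ'
    obtain rfl : β = 0 := by_contra fun h => hβ' (if_neg h)
    exact Γ.zero_mem
  | add x y _ _ hx hy =>
    exact (supp_add_subset x y).trans (Set.union_subset hx hy)
  | mul x y _ _ hx hy =>
    intro β hβ
    obtain ⟨p, hp, q, hq, rfl⟩ := supp_mul_subset x y hβ
    exact Γ.add_mem (hx hp) (hy hq)

theorem monomial_one_notMem_closedAdjoin (Γ : AddSubmonoid (Fin n →₀ ℕ))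
    {T : Set (MvPowerSeries (Fin n) K)} (hT : ∀ t ∈ T, supp K n t ⊆ Γ)
    {β : Fin n →₀ ℕ} (hβ : β ∉ Γ) : monomial β (1 : K) ∉ closedAdjoin K n T := by
  intro hmem
  obtain ⟨g, hg, hdiff⟩ := hmem (β.degree + 1)
  have h := coeff_eq_zero_of_mem_span_X_pow hdiff (Nat.lt_succ_self _)
  rw [map_sub, coeff_monomial_same, sub_eq_zero] at h
  exact hβ (supp_subset_of_mem_adjoin Γ hT hg (show coeff β g ≠ 0 from h ▸ one_ne_zero))

theorem mem_closedAdjoin_of_coeff_eq_finsum {ι : Type*} {S : Set (MvPowerSeries (Fin n) K)}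
    {c : ι → K} {Q : ι → MvPowerSeries (Fin n) K} (hQ : ∀ i, c i ≠ 0 → Q i ∈ Algebra.adjoin K S)
    {f : MvPowerSeries (Fin n) K}
    (hfin : ∀ β, (Function.support fun i => c i * coeff β (Q i)).Finite)
    (hf : ∀ β, coeff β f = ∑ᶠ i, c i * coeff β (Q i)) : f ∈ closedAdjoin K n S := by
  classical
  intro N
  let t := (Finsupp.finite_of_degree_lt (σ := Fin n) N).toFinset.biUnion fun β => (hfin β).toFinset
  refine ⟨∑ i ∈ t, c i • Q i, Subalgebra.sum_mem _ fun i _ => ?_,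
    mem_span_X_pow_of_coeff_eq_zero fun β hβ => ?_⟩
  · by_cases hc : c i = 0
    · simp [hc]
    · exact Subalgebra.smul_mem _ (hQ i hc) _
  · rw [map_sub, hf, map_sum, sub_eq_zero]
    simp_rw [coeff_smul]
    refine finsum_eq_sum_of_support_subset _ fun i hi => ?_
    simp only [t, Finset.coe_biUnion]
    exact Set.mem_biUnion (x := β) (by simpa using hβ) (by simpa using hi)

theorem exists_triangular_solution {r : (Fin n →₀ ℕ) → (Fin n →₀ ℕ) → Prop}
    [IsStrictOrder _ r] {a : Fin n → ℝ} (ha : ∀ i, 0 < a i) (Γ : Set (Fin n →₀ ℕ))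
    (P : (Fin n →₀ ℕ) → MvPowerSeries (Fin n) K) (G : MvPowerSeries (Fin n) K) :
    ∃ h : (Fin n →₀ ℕ) → K, (∀ β, h β ≠ 0 → β ∈ Γ ∧ nu K n a G ≤ weight n a β) ∧ ∀ β ∈ Γ,
      h β + ∑ γ ∈ (finite_setOf_divisionLT r ha β).toFinset, h γ * coeff β (P γ) = coeff β G := by
  classical
  let h := (wellFounded_divisionLT ha).fix fun β ih => if β ∈ Γ then
    coeff β G - ∑ γ ∈ (finite_setOf_divisionLT r ha β).toFinset,
      (if hγ : DivisionLT r a γ β then ih γ hγ else 0) * coeff β (P γ) else 0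
  have hh : ∀ β, h β = if β ∈ Γ then
      coeff β G - ∑ γ ∈ (finite_setOf_divisionLT r ha β).toFinset, h γ * coeff β (P γ)
      else 0 := by
    refine fun β => (WellFounded.fix_eq _ _ β).trans ?_
    refine if_congr Iff.rfl (congrArg _ (Finset.sum_congr rfl fun γ hγ => ?_)) rfl
    rw [dif_pos (by simpa using hγ)]
  refine ⟨h, fun β => ?_, fun β hβ => by rw [hh, if_pos hβ, sub_add_cancel]⟩
  induction β using (wellFounded_divisionLT (r := r) ha).induction with
  | _ β ih =>
    intro hβ
    have hβΓ : β ∈ Γ := by_contra fun hβΓ => hβ (by rw [hh, if_neg hβΓ])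
    refine ⟨hβΓ, ?_⟩
    by_cases hG : coeff β G = 0
    · have hsum : ∑ γ ∈ (finite_setOf_divisionLT r ha β).toFinset, h γ * coeff β (P γ) ≠ 0 :=
        fun h0 => hβ (by rw [hh, if_pos hβΓ, hG, h0, sub_zero])
      obtain ⟨γ, hγ, hne⟩ := Finset.exists_ne_zero_of_sum_ne_zero hsum
      have hγβ : DivisionLT r a γ β := by simpa using hγ
      exact (ih γ hγβ (left_ne_zero_of_mul hne)).2.trans (EReal.coe_le_coe_iff.2 hγβ.weight_le)
    · exact nu_le_weight hG

theorem exists_mem_closedAdjoin_coeff_eq {r : (Fin n →₀ ℕ) → (Fin n →₀ ℕ) → Prop}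
    [IsStrictOrder _ r] {a : Fin n → ℝ} (ha : ∀ i, 0 < a i) {S : Set (MvPowerSeries (Fin n) K)}
    (Γ : Set (Fin n →₀ ℕ)) (P : (Fin n →₀ ℕ) → MvPowerSeries (Fin n) K)
    (hPS : ∀ β ∈ Γ, P β ∈ Algebra.adjoin K S) (hP1 : ∀ β ∈ Γ, coeff β (P β) = 1)
    (hP : ∀ β ∈ Γ, SuppAbove r a (P β) β) (G : MvPowerSeries (Fin n) K) :
    ∃ H ∈ closedAdjoin K n S, (∀ β ∈ Γ, coeff β H = coeff β G) ∧ nu K n a G ≤ nu K n a H := by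
  classical
  obtain ⟨h, hΓ, hh⟩ := exists_triangular_solution (r := r) ha Γ P G
  have hterm : ∀ α γ, h γ * coeff α (P γ) ≠ 0 → γ = α ∨ DivisionLT r a γ α := fun α γ hne =>
    (hP γ (hΓ γ (left_ne_zero_of_mul hne)).1 α (right_ne_zero_of_mul hne)).imp_left Eq.symm
  have hsupp : ∀ α, (Function.support fun γ => h γ * coeff α (P γ)) ⊆
      ↑(insert α (finite_setOf_divisionLT r ha α).toFinset) := fun α γ hγ => by
    simpa [eq_comm] using hterm α γ hγ
  have hsum : ∀ α, ∑ᶠ γ, h γ * coeff α (P γ) =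
      ∑ γ ∈ insert α (finite_setOf_divisionLT r ha α).toFinset, h γ * coeff α (P γ) :=
    fun α => finsum_eq_sum_of_support_subset _ (hsupp α)
  let H : MvPowerSeries (Fin n) K := fun α => ∑ᶠ γ, h γ * coeff α (P γ)
  have hH : ∀ α, coeff α H = ∑ᶠ γ, h γ * coeff α (P γ) := fun _ => rfl
  refine ⟨H, mem_closedAdjoin_of_coeff_eq_finsum (fun γ hγ => hPS γ (hΓ γ hγ).1)
    (fun α => (Finset.finite_toSet _).subset (hsupp α)) hH, fun β hβ => ?_,
    le_nu_iff.2 fun α hα => ?_⟩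
  · rw [hH, hsum, Finset.sum_insert (by simpa using DivisionLT.irrefl), hP1 β hβ, mul_one, hh β hβ]
  · have hα' : ∑ γ ∈ insert α (finite_setOf_divisionLT r ha α).toFinset,
        h γ * coeff α (P γ) ≠ 0 := hsum α ▸ hα
    obtain ⟨γ, -, hne⟩ := Finset.exists_ne_zero_of_sum_ne_zero hα'
    refine (hΓ γ (left_ne_zero_of_mul hne)).2.trans (EReal.coe_le_coe_iff.2 ?_)
    rcases hterm α γ hne with rfl | hlt
    exacts [le_rfl, hlt.weight_le]

variable (K n)

theorem division
    (r : (Fin n →₀ ℕ) → (Fin n →₀ ℕ) → Prop) (hr : IsWellOrder (Fin n →₀ ℕ) r)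
    (hradd : ∀ α β γ : Fin n →₀ ℕ, r α β → r (α + γ) (β + γ))
    (a : Fin n → ℚ) (ha : ∀ i, 0 < a i)
    (s : ℕ) (Fs : Fin s → MvPowerSeries (Fin n) K)
    (G : MvPowerSeries (Fin n) K) :
    ∃ H R : MvPowerSeries (Fin n) K,
      H ∈ closedAdjoin K n (Set.range Fs) ∧
      G = H + R ∧
      (∀ β ∈ supp K n R, (MvPowerSeries.monomial β (1 : K)) ∉
        closedAdjoin K n (Set.range fun i => leadMon K n r (fun j => (a j : ℝ)) (Fs i))) ∧
      nu K n (fun j => (a j : ℝ)) G ≤ nu K n (fun j => (a j : ℝ)) H ∧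
      nu K n (fun j => (a j : ℝ)) G ≤ nu K n (fun j => (a j : ℝ)) R := by
  have := hr
  have ha' : ∀ i, 0 < (a i : ℝ) := fun i => Rat.cast_pos.2 (ha i)
  let Γ := AddSubmonoid.closure (⋃ i, supp K n (leadMon K n r (fun j => (a j : ℝ)) (Fs i)))
  choose! P hPA hP1 hP using fun β (hβ : β ∈ Γ) => exists_mem_adjoin_suppAbove hradd ha' Fs hβ
  obtain ⟨H, hH, hHG, hHnu⟩ := exists_mem_closedAdjoin_coeff_eq ha' Γ P hPA hP1 hP G
  refine ⟨H, G - H, hH, (add_sub_cancel H G).symm, fun β hβ => ?_, hHnu, le_nu_sub le_rfl hHnu⟩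
  refine monomial_one_notMem_closedAdjoin Γ ?_ fun hβΓ => hβ ?_
  · rintro _ ⟨i, rfl⟩
    exact fun _ hx => AddSubmonoid.subset_closure (Set.mem_iUnion.2 ⟨i, hx⟩)
  · rw [map_sub, hHG β hβΓ, sub_self]

end CanonicalFan
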